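/- Let V be a vector space over a field, W a subspace of V, and define the graded vector spaces C_•^{(n)}(V,W) for n ≥ 1 inductively by: C_0^{(1)}(V,W) = V, C_1^{(1)}(V,W) = W, C_i^{(1)}(V,W) = 0 for i ≥ 2; and for n ≥ 2, C_0^{(n)}(V,W) = V^{⊗n} and C_j^{(n)}(V,W) = (C_j^{(n-1)}(V,W) ⊗ V) ⊕ (C_{j-1}^{(n-1)}(V,W) ⊗ W) for j ≥ 1. Then for every n ≥ 1 there exists a graded differential of degree −1 on C_•^{(n)}(V,W) such that the resulting complex has zero homology in every positive degree. -/

import Mathlib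

open scoped TensorProduct

universe u

/-- The graded vector spaces `C_•^{(n)}(V, W)` of the paper:
`Cfam K V W m j = C_j^{(m+1)}(V, W)`.  Thus `C_0^{(1)} = V`, `C_1^{(1)} = W`,
`C_i^{(1)} = 0` for `i ≥ 2`, and for `n ≥ 2`, `C_0^{(n)} = C_0^{(n-1)} ⊗ V`
(so `C_0^{(n)} = V^{⊗n}`) and
`C_j^{(n)} = (C_j^{(n-1)} ⊗ V) ⊕ (C_{j-1}^{(n-1)} ⊗ W)` for `j ≥ 1`. -/
noncomputable def Cfam (K V : Type u) [Field K] [AddCommGroup V] [Module K V]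
    (W : Submodule K V) : ℕ → ℕ → ModuleCat K
  | 0, 0 => ModuleCat.of K V
  | 0, 1 => ModuleCat.of K ↥W
  | 0, _ + 2 => ModuleCat.of K ↥(⊥ : Submodule K V)
  | m + 1, 0 => ModuleCat.of K ((Cfam K V W m 0) ⊗[K] V)
  | m + 1, j + 1 =>
      ModuleCat.of K
        (((Cfam K V W m (j + 1)) ⊗[K] V) × ((Cfam K V W m j) ⊗[K] ↥W))

/-!
`C^{(n)}` is the tensor product of `C^{(n-1)}` with the two-term complex `W ↪ V`, i.e. the
mapping cone of `C^{(n-1)} ⊗ W → C^{(n-1)} ⊗ V`; we argue by induction on `n`, starting from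
the injectivity of `W ↪ V`. In the cone a cycle `(a, b)` of positive degree satisfies
`d a + ι b = 0`. Applying a retraction `p : V → W` of the inclusion gives `b = -d (p a)`, so
`a - ι (p a)` is a cycle of `C^{(n-1)} ⊗ V`, which is exact in positive degrees because `V` is
flat. Writing `a - ι (p a) = d a'` yields `(a, b) = d (a', p a)`.
-/

open LinearMap

section Cone

variable {R : Type*} [CommRing R] {M N : Type*} [AddCommGroup M] [Module R M]
  [AddCommGroup N] [Module R N] (ι : N →ₗ[R] M)
  {X Y Z T : Type*} [AddCommGroup X] [Module R X] [AddCommGroup Y] [Module R Y]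
  [AddCommGroup Z] [Module R Z] [AddCommGroup T] [Module R T]

theorem rTensor_lTensor_comm (f : Y →ₗ[R] Z) (g : N →ₗ[R] M) (x : Y ⊗[R] N) :
    f.rTensor M (g.lTensor Y x) = g.lTensor Z (f.rTensor N x) := by
  rw [← comp_apply, ← comp_apply, rTensor_comp_lTensor, lTensor_comp_rTensor]

def coneHead (e : X →ₗ[R] Y) : (X ⊗[R] M) × (Y ⊗[R] N) →ₗ[R] Y ⊗[R] M :=
  e.rTensor M ∘ₗ fst R _ _ + ι.lTensor Y ∘ₗ snd R _ _

def coneMap (e : X →ₗ[R] Y) (d : Y →ₗ[R] Z) :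
    (X ⊗[R] M) × (Y ⊗[R] N) →ₗ[R] (Y ⊗[R] M) × (Z ⊗[R] N) :=
  (coneHead ι e).prod (-(d.rTensor N ∘ₗ snd R _ _))

theorem coneHead_comp_coneMap {e : X →ₗ[R] Y} {d : Y →ₗ[R] Z} (hde : d ∘ₗ e = 0) :
    coneHead ι d ∘ₗ coneMap ι e d = 0 := by
  have hde' (x : X) : d (e x) = 0 := LinearMap.congr_fun hde x
  ext a b <;> simp [coneHead, coneMap, hde']

theorem coneMap_comp_coneMap {e : X →ₗ[R] Y} {d : Y →ₗ[R] Z} {c : Z →ₗ[R] T}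
    (hde : d ∘ₗ e = 0) (hcd : c ∘ₗ d = 0) : coneMap ι d c ∘ₗ coneMap ι e d = 0 := by
  have hde' (x : X) : d (e x) = 0 := LinearMap.congr_fun hde x
  have hcd' (y : Y) : c (d y) = 0 := LinearMap.congr_fun hcd y
  ext a b <;> simp [coneHead, coneMap, hde', hcd']

theorem exact_coneMap_coneHead [Module.Flat R M] {p : M →ₗ[R] N} (hp : p ∘ₗ ι = LinearMap.id)
    {f : T →ₗ[R] X} {e : X →ₗ[R] Y} (hfe : Function.Exact f e) :
    Function.Exact (coneMap ι f e) (coneHead ι e) := by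
  refine exact_of_comp_of_mem_range (coneHead_comp_coneMap ι hfe.linearMap_comp_eq_zero) ?_
  rintro ⟨a, b⟩ (hab : e.rTensor M a + ι.lTensor Y b = 0)
  have hpι (z : Y ⊗[R] N) : p.lTensor Y (ι.lTensor Y z) = z := by
    rw [← lTensor_comp_apply, hp, lTensor_id_apply]
  have hb : e.rTensor N (p.lTensor X a) = -b := by
    have h := congrArg (p.lTensor Y) hab
    rw [map_add, map_zero, hpι, ← rTensor_lTensor_comm] at h
    exact eq_neg_of_add_eq_zero_left h
  obtain ⟨a', ha'⟩ : a - ι.lTensor X (p.lTensor X a) ∈ range (f.rTensor M) := by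
    refine (Module.Flat.rTensor_exact M hfe _).mp ?_
    rw [map_sub, rTensor_lTensor_comm, hb, map_neg, sub_neg_eq_add, hab]
  refine ⟨(a', p.lTensor X a), ?_⟩
  simp [coneMap, coneHead, ha', hb]

theorem exact_coneMap_coneMap [Module.Flat R M] {p : M →ₗ[R] N} (hp : p ∘ₗ ι = LinearMap.id)
    {f : T →ₗ[R] X} {e : X →ₗ[R] Y} {d : Y →ₗ[R] Z} (hfe : Function.Exact f e)
    (hde : d ∘ₗ e = 0) : Function.Exact (coneMap ι f e) (coneMap ι e d) :=
  exact_of_comp_eq_zero_of_ker_le_range (coneMap_comp_coneMap ι hfe.linearMap_comp_eq_zero hde)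
    fun x hx ↦ (exact_coneMap_coneHead ι hp hfe x).mp (congrArg Prod.fst hx)

end Cone

universe v w

section ConeFamily

variable {R : Type v} [CommRing R]

def HasAcyclicDifferential (C : ℕ → ModuleCat.{w} R) : Prop :=
  ∃ d : ∀ j, C (j + 1) →ₗ[R] C j, ∀ j, Function.Exact (d (j + 1)) (d j)

variable (M N : Type w) [AddCommGroup M] [Module R M] [AddCommGroup N] [Module R N]

def coneFamily (C : ℕ → ModuleCat.{w} R) : ℕ → ModuleCat.{w} R
  | 0 => ModuleCat.of R (C 0 ⊗[R] M)
  | j + 1 => ModuleCat.of R ((C (j + 1) ⊗[R] M) × (C j ⊗[R] N))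

variable {M N} {C : ℕ → ModuleCat.{w} R}

def coneDiff (ι : N →ₗ[R] M) (d : ∀ j, C (j + 1) →ₗ[R] C j) :
    ∀ j, coneFamily M N C (j + 1) →ₗ[R] coneFamily M N C j
  | 0 => coneHead ι (d 0)
  | j + 1 => coneMap ι (d (j + 1)) (d j)

theorem HasAcyclicDifferential.coneFamily [Module.Flat R M] (ι : N →ₗ[R] M) {p : M →ₗ[R] N}
    (hp : p ∘ₗ ι = LinearMap.id) (hC : HasAcyclicDifferential C) :
    HasAcyclicDifferential (coneFamily M N C) := by
  obtain ⟨d, hd⟩ := hC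
  refine ⟨coneDiff ι d, ?_⟩
  rintro (_ | j)
  · exact exact_coneMap_coneHead ι hp (hd 0)
  · exact exact_coneMap_coneMap ι hp (hd (j + 1)) (hd j).linearMap_comp_eq_zero

end ConeFamily

theorem cfam_succ (K V : Type u) [Field K] [AddCommGroup V] [Module K V] (W : Submodule K V)
    (m : ℕ) : Cfam K V W (m + 1) = coneFamily V W (Cfam K V W m) := by
  funext j
  cases j <;> rfl

theorem hasAcyclicDifferential_cfam_zero (K V : Type u) [Field K] [AddCommGroup V] [Module K V]
    (W : Submodule K V) : HasAcyclicDifferential (Cfam K V W 0) := by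
  refine ⟨fun | 0 => W.subtype | _ + 1 => 0, ?_⟩
  rintro (_ | j)
  · exact (exact_zero_iff_injective _ _).mpr W.injective_subtype
  · intro x
    obtain rfl : x = 0 := Subsingleton.elim (α := ↥(⊥ : Submodule K V)) x 0
    exact iff_of_true (map_zero _) ⟨0, map_zero _⟩

/-- **Lemma (appendix).**  Let `V` be a vector space over a field `K` and `W` a
subspace of `V`.  For every `n ≥ 1` there exists a graded differential of
degree `-1` on `C_•^{(n)}(V, W)` (a family of linear maps
`d_j : C_{j+1}^{(n)} → C_j^{(n)}` with `d ∘ d = 0`) such that the resulting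
complex has zero homology in every positive degree, i.e.
`ker(d : C_{j+1} → C_j) = im(d : C_{j+2} → C_{j+1})` for every `j ≥ 0`. -/
theorem statement18
    (K V : Type u) [Field K] [AddCommGroup V] [Module K V]
    (W : Submodule K V) (m : ℕ) :
    ∃ d : ∀ j : ℕ, (Cfam K V W m (j + 1) →ₗ[K] Cfam K V W m j),
      (∀ j : ℕ, (d j).comp (d (j + 1)) = 0) ∧
      (∀ j : ℕ, LinearMap.ker (d j) ≤ LinearMap.range (d (j + 1))) := by
  obtain ⟨d, hd⟩ : HasAcyclicDifferential (Cfam K V W m) := by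
    induction m with
    | zero => exact hasAcyclicDifferential_cfam_zero K V W
    | succ m ih =>
      obtain ⟨p, hp⟩ := W.subtype.exists_leftInverse_of_injective W.ker_subtype
      rw [cfam_succ]
      exact ih.coneFamily W.subtype hp
  exact ⟨d, fun j ↦ (hd j).linearMap_comp_eq_zero, fun j ↦ (hd j).linearMap_ker_eq.le⟩
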